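/- Consider the quadratic ODE ẏ(t) = (J - R) y(t) + H(y(t) ⊗ y(t)) with J skew-symmetric, R symmetric positive definite with smallest eigenvalue bounded below by λ > 0, and each H_i skew-symmetric. Then any solution satisfies the exponential decay estimate ‖y(t)‖₂² ≤ e^{-2λt} ‖y(0)‖₂² for all t ≥ 0. -/

import Mathlib

/-!
Along a solution the skew-symmetric parts do no work: `yᵀ J y = 0` and `yᵀ Hᵢ y = 0`, so the
quadratic term `∑ i, yᵢ Hᵢ y` drops out of the energy balance and
`d/dt ‖y‖² = -2 yᵀ R y ≤ -2λ ‖y‖²`. Grönwall's inequality then gives the exponential decay.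
-/

open Matrix

section Skew

variable {ι α : Type*} [Fintype ι] [CommRing α] [IsAddTorsionFree α]

theorem dotProduct_mulVec_self_eq_zero_of_transpose_eq_neg {A : Matrix ι ι α} (hA : Aᵀ = -A)
    (x : ι → α) : x ⬝ᵥ A *ᵥ x = 0 := by
  rw [← self_eq_neg]
  conv_lhs => rw [dotProduct_mulVec, ← mulVec_transpose, hA, neg_mulVec, neg_dotProduct,
    dotProduct_comm]

theorem dotProduct_sum_smul_mulVec_self_eq_zero {H : ι → Matrix ι ι α}
    (hH : ∀ i, (H i)ᵀ = -H i) (c : ι → α) (x : ι → α) :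
    x ⬝ᵥ ∑ i, c i • H i *ᵥ x = 0 := by
  simp [dotProduct_sum, dotProduct_smul,
    dotProduct_mulVec_self_eq_zero_of_transpose_eq_neg (hH _)]

theorem dotProduct_sub_mulVec_add_sum_smul_mulVec {J R : Matrix ι ι α} {H : ι → Matrix ι ι α}
    (hJ : Jᵀ = -J) (hH : ∀ i, (H i)ᵀ = -H i) (x : ι → α) :
    x ⬝ᵥ ((J - R) *ᵥ x + ∑ i, x i • H i *ᵥ x) = -(x ⬝ᵥ R *ᵥ x) := by
  rw [dotProduct_add, sub_mulVec, dotProduct_sub,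
    dotProduct_mulVec_self_eq_zero_of_transpose_eq_neg hJ,
    dotProduct_sum_smul_mulVec_self_eq_zero hH, zero_sub, add_zero]

end Skew

theorem HasDerivWithinAt.sum_sq {ι : Type*} [Fintype ι] {y : ℝ → ι → ℝ} {y' : ι → ℝ}
    {s : Set ℝ} {t : ℝ} (hy : HasDerivWithinAt y y' s t) :
    HasDerivWithinAt (fun t => ∑ i, y t i ^ 2) (2 * (y t ⬝ᵥ y')) s t := by
  refine (HasDerivWithinAt.fun_sum fun i _ =>
    (hasDerivWithinAt_pi.1 hy i).fun_pow 2).congr_deriv ?_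
  rw [dotProduct, Finset.mul_sum]
  exact Finset.sum_congr rfl fun i _ => by ring

theorem stmt5_general (n : ℕ) (J R : Matrix (Fin n) (Fin n) ℝ)
    (H : Fin n → Matrix (Fin n) (Fin n) ℝ) (lam : ℝ)
    (hJ : Jᵀ = -J)
    (hRlb : ∀ x : Fin n → ℝ, lam * (∑ i, (x i) ^ 2) ≤ x ⬝ᵥ R.mulVec x)
    (hH : ∀ i, (H i)ᵀ = -(H i))
    (y : ℝ → Fin n → ℝ)
    (hy : ∀ t ∈ Set.Ici (0 : ℝ), HasDerivWithinAt y
      ((J - R).mulVec (y t) + ∑ i, y t i • (H i).mulVec (y t)) (Set.Ici 0) t) :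
    ∀ t ≥ (0 : ℝ),
      (∑ i, (y t i) ^ 2) ≤ Real.exp (-2 * lam * t) * (∑ i, (y 0 i) ^ 2) := by
  intro t ht
  have hV : ∀ s ∈ Set.Ici (0 : ℝ), HasDerivWithinAt (fun t => ∑ i, y t i ^ 2)
      (-2 * (y s ⬝ᵥ R *ᵥ y s)) (Set.Ici 0) s := fun s hs => by
    simpa [dotProduct_sub_mulVec_add_sum_smul_mulVec hJ hH] using (hy s hs).sum_sq
  have hcont : ContinuousOn (fun t => ∑ i, y t i ^ 2) (Set.Icc 0 t) :=
    fun s hs => (hV s hs.1).continuousWithinAt.mono Set.Icc_subset_Ici_self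
  have hbound := le_gronwallBound_of_liminf_deriv_right_le (K := -2 * lam) (ε := 0) hcont
    (fun s hs _ hr => ((hV s hs.1).mono (Set.Ici_subset_Ici.2 hs.1)).liminf_right_slope_le hr)
    le_rfl (fun s _ => by linarith [hRlb (y s)]) t ⟨ht, le_rfl⟩
  rwa [gronwallBound_ε0, sub_zero, mul_comm] at hbound

/-- Exponential decay: if `xᵀ R x ≥ λ ‖x‖₂²` with `λ > 0`, `R` symmetric, `J`, `Hᵢ`
skew-symmetric, then solutions of `ẏ = (J - R) y + ∑ i, yᵢ Hᵢ y` satisfy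
`‖y(t)‖₂² ≤ e^{-2 λ t} ‖y(0)‖₂²` for `t ≥ 0`. -/
theorem stmt5 (n : ℕ) (J R : Matrix (Fin n) (Fin n) ℝ)
    (H : Fin n → Matrix (Fin n) (Fin n) ℝ) (lam : ℝ) (hlam : 0 < lam)
    (hJ : Jᵀ = -J) (hR : Rᵀ = R)
    (hRlb : ∀ x : Fin n → ℝ, lam * (∑ i, (x i) ^ 2) ≤ x ⬝ᵥ R.mulVec x)
    (hH : ∀ i, (H i)ᵀ = -(H i))
    (y : ℝ → Fin n → ℝ)
    (hy : ∀ t ∈ Set.Ici (0 : ℝ), HasDerivWithinAt y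
      ((J - R).mulVec (y t) + ∑ i, y t i • (H i).mulVec (y t)) (Set.Ici 0) t) :
    ∀ t ≥ (0 : ℝ),
      (∑ i, (y t i) ^ 2) ≤ Real.exp (-2 * lam * t) * (∑ i, (y 0 i) ^ 2) :=
  stmt5_general n J R H lam hJ hRlb hH y hy
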